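/- arXiv:1612.04030 — 2 statements merged into one kernel-verified Lean document; each statement's English description precedes it below -/
import Mathlib

section
/- Under uniform caching P_u with p_{ij} = Q_i/M, the SDP of the interference-limited N-tier HetNet equals Σ_{j=1}^M (Q_e t_j)/(T(τ,β) Q_e + D(τ,β) M), where Q_e = (Σ_i λ_i S_i^{2/β} Q_i)/(Σ_i λ_i S_i^{2/β}). Equivalently, substituting p_{ij} = Q_i/M into C'(P) = Σ_j (Σ_i λ_i S_i^{2/β} p_{ij} t_j)/(Σ_l λ_l S_l^{2/β}(T p_{lj} + D)) yields Q_e/(T Q_e + D M) · Σ_j t_j. -/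
open Finset

theorem sdp_uniform_caching_equivalent_single_tier
    (N M : ℕ) (hN : 0 < N) (hM : 0 < M)
    (lam S Q : Fin N → ℝ) (t : Fin M → ℝ) (T D β : ℝ)
    (hlam : ∀ i, 0 < lam i) (hS : ∀ i, 0 < S i)
    (hQ : ∀ i, 0 ≤ Q i ∧ Q i ≤ (M:ℝ))
    (hT : 0 < T) (hD : 0 < D) (hβ : 0 < β)
    (ht : ∀ j, 0 < t j) (htsum : ∑ j, t j = 1)
    (a : Fin N → ℝ) (haa : ∀ i, a i = lam i * S i ^ ((2:ℝ)/β))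
    (Qe : ℝ) (hQe : Qe = (∑ i, a i * Q i) / (∑ i, a i)) :
    (∑ j, (∑ i, a i * (Q i / (M:ℝ)) * t j) /
        (∑ l, a l * (T * (Q l / (M:ℝ)) + D)))
      = ∑ j, Qe * t j / (T * Qe + D * (M:ℝ)) ∧
    (∑ j, Qe * t j / (T * Qe + D * (M:ℝ)))
      = Qe / (T * Qe + D * (M:ℝ)) * ∑ j, t j := by
  have ha : ∀ i, 0 < a i := fun i => by
    rw [haa i]
    exact mul_pos (hlam i) (Real.rpow_pos_of_pos (hS i) _)
  have hA : 0 < ∑ i, a i :=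
    Finset.sum_pos (fun i _ => ha i) (univ_nonempty_iff.mpr ⟨⟨0, hN⟩⟩)
  have hAQ : 0 ≤ ∑ i, a i * Q i :=
    Finset.sum_nonneg fun i _ => mul_nonneg (ha i).le (hQ i).1
  have hQe0 : 0 ≤ Qe := hQe ▸ div_nonneg hAQ hA.le
  have hMpos : (0:ℝ) < (M:ℝ) := Nat.cast_pos.mpr hM
  have hden : 0 < T * Qe + D * (M:ℝ) :=
    add_pos_of_nonneg_of_pos (mul_nonneg hT.le hQe0) (mul_pos hD hMpos)
  have hSumQe : ∑ i, a i * Q i = Qe * ∑ i, a i := by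
    rw [hQe]; field_simp
  constructor
  · apply Finset.sum_congr rfl
    intro j _
    have h1 : (∑ i, a i * (Q i / (M:ℝ)) * t j)
        = (Qe * ∑ i, a i) * t j / (M:ℝ) := by
      rw [← hSumQe, Finset.sum_mul, Finset.sum_div]
      exact Finset.sum_congr rfl fun i _ => by ring
    have h2 : (∑ l, a l * (T * (Q l / (M:ℝ)) + D))
        = (∑ i, a i) * (T * Qe + D * (M:ℝ)) / (M:ℝ) := by
      have : (∑ l, a l * (T * (Q l / (M:ℝ)) + D))
          = T * (∑ l, a l * Q l) / (M:ℝ) + D * ∑ l, a l := by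
        rw [Finset.mul_sum, Finset.sum_div, Finset.mul_sum,
          ← Finset.sum_add_distrib]
        refine Finset.sum_congr rfl fun i _ => ?_
        field_simp
      rw [this, hSumQe]
      field_simp
    rw [h1, h2]
    have hM0 : (M:ℝ) ≠ 0 := ne_of_gt hMpos
    have hA0 : (∑ i, a i) ≠ 0 := ne_of_gt hA
    have hd0 : T * Qe + D * (M:ℝ) ≠ 0 := ne_of_gt hden
    field_simp
  · rw [Finset.mul_sum]
    apply Finset.sum_congr rfl
    intro j _
    rw [div_mul_eq_mul_div]
end

section
/- With K_1 = Σ_{j≠i} λ_j (S_j/S_i)^{2/β}(Q_e − Q_j) as above and λ_i > 0: (a) if Q_i > Q_e then K_1 > 0, and on the interval Q_i ∈ (Q_e, ∞) the map Q_i ↦ K_1/(Q_i − Q_e) is strictly decreasing; (b) if Q_i < Q_e then K_1 < 0, and on [0, Q_e) the map Q_i ↦ K_1/(Q_i − Q_e) is strictly increasing. -/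
open Finset

theorem density_cache_tradeoff_sign
    (N : ℕ) (i : Fin N) (lam S Q : Fin N → ℝ) (β Qe : ℝ)
    (hlam : ∀ k, 0 < lam k) (hS : ∀ k, 0 < S k) (hβ : 0 < β)
    (hQe : Qe = (∑ k, lam k * S k ^ ((2:ℝ)/β) * Q k) /
      (∑ k, lam k * S k ^ ((2:ℝ)/β)))
    (K1 : ℝ)
    (hK1 : K1 = ∑ j ∈ univ.erase i, lam j * (S j / S i) ^ ((2:ℝ)/β) * (Qe - Q j)) :
    (Qe < Q i → 0 < K1 ∧
      StrictAntiOn (fun q : ℝ => K1 / (q - Qe)) (Set.Ioi Qe)) ∧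
    (Q i < Qe → K1 < 0 ∧
      StrictMonoOn (fun q : ℝ => K1 / (q - Qe)) (Set.Ico 0 Qe)) := by
  set p : ℝ := (2:ℝ)/β with hp
  have hSip : (0:ℝ) < S i ^ p := Real.rpow_pos_of_pos (hS i) _
  have hc : ∀ k, (0:ℝ) < lam k * S k ^ p := fun k =>
    mul_pos (hlam k) (Real.rpow_pos_of_pos (hS k) _)
  have hT : (0:ℝ) < ∑ k, lam k * S k ^ p := Finset.sum_pos (fun k _ => hc k) ⟨i, mem_univ i⟩
  have hsum : ∑ k, lam k * S k ^ p * (Qe - Q k) = 0 := by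
    have h1 : Qe * ∑ k, lam k * S k ^ p = ∑ k, lam k * S k ^ p * Q k := by
      rw [hQe, div_mul_cancel₀ _ hT.ne']
    calc ∑ k, lam k * S k ^ p * (Qe - Q k)
        = Qe * (∑ k, lam k * S k ^ p) - ∑ k, lam k * S k ^ p * Q k := by
          rw [Finset.mul_sum, ← Finset.sum_sub_distrib]
          exact Finset.sum_congr rfl (fun k _ => by ring)
      _ = 0 := by rw [h1]; ring
  have h2 : K1 * S i ^ p = ∑ j ∈ univ.erase i, lam j * S j ^ p * (Qe - Q j) := by
    rw [hK1, Finset.sum_mul]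
    refine Finset.sum_congr rfl (fun j _ => ?_)
    rw [Real.div_rpow (hS j).le (hS i).le]
    field_simp
  have h3 : ∑ j ∈ univ.erase i, lam j * S j ^ p * (Qe - Q j)
      = - (lam i * S i ^ p * (Qe - Q i)) := by
    have h4 := Finset.sum_erase_add univ (fun k => lam k * S k ^ p * (Qe - Q k)) (mem_univ i)
    rw [hsum] at h4
    beta_reduce at h4
    linarith
  have hK : K1 = lam i * (Q i - Qe) := by
    have : K1 * S i ^ p = (lam i * (Q i - Qe)) * S i ^ p := by
      rw [h2, h3]; ring
    exact mul_right_cancel₀ hSip.ne' this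
  constructor
  · intro h
    have hK1pos : 0 < K1 := by rw [hK]; exact mul_pos (hlam i) (by linarith)
    refine ⟨hK1pos, fun a ha b hb hab => ?_⟩
    simp only [Set.mem_Ioi] at ha hb
    exact div_lt_div_of_pos_left hK1pos (by linarith) (by linarith)
  · intro h
    have hK1neg : K1 < 0 := by
      rw [hK]
      exact mul_neg_of_pos_of_neg (hlam i) (by linarith)
    refine ⟨hK1neg, fun a ha b hb hab => ?_⟩
    simp only [Set.mem_Ico] at ha hb
    have e1 : K1 / (a - Qe) = (-K1) / (Qe - a) := by
      rw [div_eq_div_iff (by linarith) (by linarith)]; ring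
    have e2 : K1 / (b - Qe) = (-K1) / (Qe - b) := by
      rw [div_eq_div_iff (by linarith) (by linarith)]; ring
    simp only [e1, e2]
    exact div_lt_div_of_pos_left (by linarith) (by linarith) (by linarith)
end
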